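/- Let A, B, C, Δ be real with C > 0 and A + C ≤ 0, let ℰ > 0, and let 𝓛_ℰ = {(X, Y, Z) ∈ ℝ³ : X² + Y² = (ℰ² − Z²)² and |Z| ≤ ℰ}, with ℋ(X, Y, Z) = C·X + (Bℰ+Δ)·Z + A·Z². Set h1 = ℰ·((A − B)·ℰ − Δ) and h2 = ℰ·((A + B)·ℰ + Δ). Then ℋ(p) ≥ min(h1, h2) for every p ∈ 𝓛_ℰ, and the minimum is attained at one of the normal-mode points (0, 0, −ℰ) (where ℋ = h1) or (0, 0, ℰ) (where ℋ = h2). -/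

import Mathlib

/-!
On the lemon, `X ≥ -(ℰ² - Z²)` because `X² ≤ (ℰ² - Z²)²`, so for `C > 0` the Hamiltonian is
bounded below by the quadratic `g(Z) = (A + C) Z² + (Bℰ + Δ) Z - Cℰ²`, with equality at the two
singular points, where `g(∓ℰ) = h1, h2`. When `A + C ≤ 0` the quadratic `g` is concave, so its
minimum over `[-ℰ, ℰ]` is attained at an endpoint.
-/

open Set

def lemon (E : ℝ) : Set (ℝ × ℝ × ℝ) :=
  {p | p.1 ^ 2 + p.2.1 ^ 2 = (E ^ 2 - p.2.2 ^ 2) ^ 2 ∧ |p.2.2| ≤ E}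

def reducedHamiltonian (A B C Δ E : ℝ) (p : ℝ × ℝ × ℝ) : ℝ :=
  C * p.1 + (B * E + Δ) * p.2.2 + A * p.2.2 ^ 2

lemma concaveOn_quadratic {𝕜 : Type*} [Field 𝕜] [LinearOrder 𝕜] [IsStrictOrderedRing 𝕜]
    {a : 𝕜} (ha : a ≤ 0) (b c : 𝕜) :
    ConcaveOn 𝕜 univ fun z : 𝕜 => a * z ^ 2 + b * z + c := by
  have hsq : ConcaveOn 𝕜 univ fun z : 𝕜 => a * z ^ 2 := neg_convexOn_iff.1 <| by
    simpa [Pi.neg_def, neg_mul] using (even_two.convexOn_pow (𝕜 := 𝕜)).smul (neg_nonneg.2 ha)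
  have hlin : ConcaveOn 𝕜 univ fun z : 𝕜 => b * z :=
    (LinearMap.mulLeft 𝕜 b).concaveOn convex_univ
  exact (hsq.add hlin).add_const c

lemma mem_lemon_of_abs_eq {E s : ℝ} (hs : |s| = E) : ((0, 0, s) : ℝ × ℝ × ℝ) ∈ lemon E :=
  ⟨by simp [← hs], hs.le⟩

lemma neg_le_fst_of_mem_lemon {E : ℝ} {p : ℝ × ℝ × ℝ} (hp : p ∈ lemon E) :
    -(E ^ 2 - p.2.2 ^ 2) ≤ p.1 := by
  obtain ⟨hsphere, hZ⟩ := hp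
  have hZ2 : p.2.2 ^ 2 ≤ E ^ 2 := sq_le_sq' (abs_le.1 hZ).1 (abs_le.1 hZ).2
  refine (abs_le_of_sq_le_sq' ?_ (sub_nonneg.2 hZ2)).1
  nlinarith [sq_nonneg p.2.1]

lemma quadratic_le_reducedHamiltonian {A B C Δ E : ℝ} (hC : 0 ≤ C) {p : ℝ × ℝ × ℝ}
    (hp : p ∈ lemon E) :
    (A + C) * p.2.2 ^ 2 + (B * E + Δ) * p.2.2 + -C * E ^ 2 ≤ reducedHamiltonian A B C Δ E p := by
  have hX := mul_le_mul_of_nonneg_left (neg_le_fst_of_mem_lemon hp) hC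
  unfold reducedHamiltonian
  linarith

/-- For C > 0 and A + C ≤ 0, the reduced Hamiltonian on the lemon is bounded below by
min(h1, h2), and the minimum is attained at one of the normal-mode points
(0,0,−ℰ) (where ℋ = h1) or (0,0,ℰ) (where ℋ = h2). -/
theorem hamiltonian_min_at_normal_modes (A B C Δ : ℝ) (hC : 0 < C) (hAC : A + C ≤ 0)
    (E : ℝ) (hE : 0 < E) :
    let L : Set (ℝ × ℝ × ℝ) :=
      {p | p.1 ^ 2 + p.2.1 ^ 2 = (E ^ 2 - p.2.2 ^ 2) ^ 2 ∧ |p.2.2| ≤ E}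
    let H : ℝ × ℝ × ℝ → ℝ :=
      fun p => C * p.1 + (B * E + Δ) * p.2.2 + A * p.2.2 ^ 2
    let h1 := E * ((A - B) * E - Δ)
    let h2 := E * ((A + B) * E + Δ)
    (∀ p ∈ L, min h1 h2 ≤ H p)
    ∧ ((0, 0, -E) : ℝ × ℝ × ℝ) ∈ L ∧ ((0, 0, E) : ℝ × ℝ × ℝ) ∈ L
    ∧ H (0, 0, -E) = h1 ∧ H (0, 0, E) = h2
    ∧ (∃ p ∈ L, H p = min h1 h2 ∧ (p = ((0, 0, -E) : ℝ × ℝ × ℝ) ∨ p = (0, 0, E))) := by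
  intro L H h1 h2
  have hm1 : ((0, 0, -E) : ℝ × ℝ × ℝ) ∈ lemon E := mem_lemon_of_abs_eq (by simp [hE.le])
  have hm2 : ((0, 0, E) : ℝ × ℝ × ℝ) ∈ lemon E := mem_lemon_of_abs_eq (abs_of_pos hE)
  have hH1 : H (0, 0, -E) = h1 := by simp only [H, h1]; ring
  have hH2 : H (0, 0, E) = h2 := by simp only [H, h2]; ring
  let g : ℝ → ℝ := fun z => (A + C) * z ^ 2 + (B * E + Δ) * z + -C * E ^ 2
  have hg1 : g (-E) = h1 := by simp only [g, h1]; ring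
  have hg2 : g E = h2 := by simp only [g, h2]; ring
  have hbound : ∀ p ∈ L, min h1 h2 ≤ H p := fun p hp =>
    calc min h1 h2 = min (g (-E)) (g E) := by rw [hg1, hg2]
      _ ≤ g p.2.2 := (concaveOn_quadratic hAC _ _).min_le_of_mem_Icc (mem_univ _) (mem_univ _)
          (abs_le.1 hp.2)
      _ ≤ H p := quadratic_le_reducedHamiltonian hC.le hp
  refine ⟨hbound, hm1, hm2, hH1, hH2, ?_⟩
  rcases min_choice h1 h2 with h | h
  · exact ⟨(0, 0, -E), hm1, hH1.trans h.symm, Or.inl rfl⟩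
  · exact ⟨(0, 0, E), hm2, hH2.trans h.symm, Or.inr rfl⟩
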